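/- arXiv:2109.09539 — 3 statements merged into one kernel-verified Lean document; each statement's English description precedes it below -/
import Mathlib

section
/- Let B be a complete Boolean algebra, A a Boolean subalgebra of B, and k, l, m, n families of elements of A indexed by a set I such that there exists some Boolean algebra C containing A as a subalgebra and an element y ∈ C with (y ⊓ kᵢ) ⊔ (yᶜ ⊓ lᵢ) = (y ⊓ mᵢ) ⊔ (yᶜ ⊓ nᵢ) for all i ∈ I. Then there exists a ∈ B satisfying (a ⊓ kᵢ) ⊔ (aᶜ ⊓ lᵢ) = (a ⊓ mᵢ) ⊔ (aᶜ ⊓ nᵢ) for all i ∈ I. -/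
/-!
Both sides of `(x ⊓ k) ⊔ (xᶜ ⊓ l) = (x ⊓ m) ⊔ (xᶜ ⊓ n)` agree below `x` iff `x` misses `k ∆ m`,
and agree below `xᶜ` iff `x` contains `l ∆ n`. So `x` solves the system iff
`⨆ j, l j ∆ n j ≤ x ≤ ⨅ i, (k i ∆ m i)ᶜ`. A solution `y` anywhere forces every `l j ∆ n j` to be
disjoint from every `k i ∆ m i`; this is a statement about elements of `A`, so it passes through
the embeddings, and in the complete algebra `B` the supremum `⨆ j, l j ∆ n j` is then a solution.
-/

open scoped symmDiff

section BooleanAlgebra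

variable {α : Type*} [BooleanAlgebra α]

lemma inf_eq_inf_iff_disjoint_symmDiff (x k m : α) : x ⊓ k = x ⊓ m ↔ Disjoint x (k ∆ m) := by
  rw [disjoint_iff, inf_symmDiff_distrib_left, symmDiff_eq_bot]

lemma inf_sup_compl_inf_eq_iff (x k l m n : α) :
    (x ⊓ k) ⊔ (xᶜ ⊓ l) = (x ⊓ m) ⊔ (xᶜ ⊓ n) ↔ Disjoint x (k ∆ m) ∧ l ∆ n ≤ x := by
  rw [← inf_eq_inf_iff_disjoint_symmDiff, ← disjoint_compl_left_iff,
    ← inf_eq_inf_iff_disjoint_symmDiff]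
  refine ⟨fun h => ⟨?_, ?_⟩, fun ⟨hx, hxc⟩ => by rw [hx, hxc]⟩
  · simpa [inf_sup_left, ← inf_assoc] using congrArg (x ⊓ ·) h
  · simpa [inf_sup_left, ← inf_assoc] using congrArg (xᶜ ⊓ ·) h

lemma disjoint_symmDiff_of_inf_sup_compl_inf_eq {I : Type*} {k l m n : I → α} {x : α}
    (hx : ∀ i, (x ⊓ k i) ⊔ (xᶜ ⊓ l i) = (x ⊓ m i) ⊔ (xᶜ ⊓ n i)) (i j : I) :
    Disjoint (l j ∆ n j) (k i ∆ m i) :=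
  ((inf_sup_compl_inf_eq_iff _ _ _ _ _).mp (hx i)).1.mono_left
    ((inf_sup_compl_inf_eq_iff _ _ _ _ _).mp (hx j)).2

end BooleanAlgebra

lemma exists_inf_sup_compl_inf_eq_of_disjoint_symmDiff {α : Type*} [CompleteBooleanAlgebra α]
    {I : Type*} {k l m n : I → α} (h : ∀ i j, Disjoint (l j ∆ n j) (k i ∆ m i)) :
    ∃ x : α, ∀ i, (x ⊓ k i) ⊔ (xᶜ ⊓ l i) = (x ⊓ m i) ⊔ (xᶜ ⊓ n i) :=
  ⟨⨆ j, l j ∆ n j, fun i => (inf_sup_compl_inf_eq_iff _ _ _ _ _).mpr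
    ⟨iSup_disjoint_iff.mpr fun j => h i j, le_iSup (fun j => l j ∆ n j) i⟩⟩

lemma Disjoint.of_map_of_injective {α β F : Type*} [Lattice α] [OrderBot α] [Lattice β]
    [OrderBot β] [FunLike F α β] [InfHomClass F α β] [BotHomClass F α β] {f : F}
    (hf : Function.Injective f) {a b : α} (h : Disjoint (f a) (f b)) : Disjoint a b := by
  rw [disjoint_iff, ← map_inf, ← map_bot f] at h
  exact disjoint_iff.mpr (hf h)

theorem complete_boolean_algebra_solves_extension_conditions_general
    {B : Type*} [CompleteBooleanAlgebra B]
    {A : Type*} [BooleanAlgebra A]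
    (iAB : BoundedLatticeHom A B)
    {I : Type*} (k l m n : I → A)
    (C : Type*) [BooleanAlgebra C]
    (iAC : BoundedLatticeHom A C) (hiAC : Function.Injective iAC)
    (y : C)
    (hy : ∀ i, (y ⊓ iAC (k i)) ⊔ (yᶜ ⊓ iAC (l i)) = (y ⊓ iAC (m i)) ⊔ (yᶜ ⊓ iAC (n i))) :
    ∃ a : B, ∀ i, (a ⊓ iAB (k i)) ⊔ (aᶜ ⊓ iAB (l i)) = (a ⊓ iAB (m i)) ⊔ (aᶜ ⊓ iAB (n i)) := by
  have hA : ∀ i j, Disjoint (l j ∆ n j) (k i ∆ m i) := fun i j =>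
    Disjoint.of_map_of_injective hiAC <| by
      simpa only [map_symmDiff'] using disjoint_symmDiff_of_inf_sup_compl_inf_eq hy i j
  refine exists_inf_sup_compl_inf_eq_of_disjoint_symmDiff fun i j => ?_
  simpa only [map_symmDiff'] using (hA i j).map iAB

/-- If a Boolean subalgebra `A` of a complete Boolean algebra `B` (presented via a
Boolean embedding `iAB : A → B`) admits, in some Boolean extension `C` of `A`
(presented via a Boolean embedding `iAC : A → C`), an element `y` satisfying a
system of extension conditions with coefficients in `A`, then some `a ∈ B`
satisfies the same conditions. -/
theorem complete_boolean_algebra_solves_extension_conditions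
    {B : Type*} [CompleteBooleanAlgebra B]
    {A : Type*} [BooleanAlgebra A]
    (iAB : BoundedLatticeHom A B) (hiAB : Function.Injective iAB)
    {I : Type*} (k l m n : I → A)
    (C : Type*) [BooleanAlgebra C]
    (iAC : BoundedLatticeHom A C) (hiAC : Function.Injective iAC)
    (y : C)
    (hy : ∀ i, (y ⊓ iAC (k i)) ⊔ (yᶜ ⊓ iAC (l i)) = (y ⊓ iAC (m i)) ⊔ (yᶜ ⊓ iAC (n i))) :
    ∃ a : B, ∀ i, (a ⊓ iAB (k i)) ⊔ (aᶜ ⊓ iAB (l i)) = (a ⊓ iAB (m i)) ⊔ (aᶜ ⊓ iAB (n i)) :=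
  complete_boolean_algebra_solves_extension_conditions_general iAB k l m n C iAC hiAC y hy
end

section
/- An abelian group D is divisible if and only if for every abelian group A, every subgroup B of A, and every group homomorphism f : B → D, there exists a group homomorphism g : A → D extending f. -/
/-!
A divisible group is a divisible `ℤ`-module, hence injective by Baer's criterion, and so every
homomorphism from a subgroup extends. Conversely, to divide `d` by `n > 0`, extend the homomorphism
`n • ℤ → D` sending `n` to `d` to all of `ℤ`; the image of `1` is an `n`-th part of `d`.
-/

theorem Module.Baer.of_forall_exists_nsmul_eq {D : Type*} [AddCommGroup D]
    (hdiv : ∀ (d : D) (n : ℕ), 0 < n → ∃ x : D, n • x = d) : Module.Baer ℤ D :=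
  letI : DivisibleBy D ℕ :=
    divisibleByOfSMulRightSurj D ℕ fun hn d => hdiv d _ (Nat.pos_of_ne_zero hn)
  letI : DivisibleBy D ℤ := AddGroup.divisibleByIntOfDivisibleByNat D
  Module.Baer.of_divisible D

theorem AddMonoidHom.exists_comp_eq_of_forall_addSubgroup {D M N : Type} [AddCommGroup D]
    [AddCommGroup M] [AddCommGroup N]
    (hext : ∀ (A : Type) (_ : AddCommGroup A) (B : AddSubgroup A) (f : B →+ D),
      ∃ g : A →+ D, ∀ b : B, g b = f b)
    {i : M →+ N} (hi : Function.Injective i) (f : M →+ D) : ∃ g : N →+ D, g.comp i = f := by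
  obtain ⟨g, hg⟩ := hext N inferInstance i.range
    (f.comp (AddMonoidHom.ofInjective hi).symm.toAddMonoidHom)
  refine ⟨g, AddMonoidHom.ext fun m => ?_⟩
  simpa [AddMonoidHom.ofInjective_apply] using hg (AddMonoidHom.ofInjective hi m)

theorem divisible_iff_injective_abelian_group (D : Type) [AddCommGroup D] :
    (∀ (d : D) (n : ℕ), 0 < n → ∃ x : D, n • x = d) ↔
      ∀ (A : Type) (_ : AddCommGroup A) (B : AddSubgroup A) (f : B →+ D),
        ∃ g : A →+ D, ∀ b : B, g b = f b := by
  constructor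
  · intro hdiv A _ B f
    obtain ⟨g, hg⟩ :=
      (Module.Baer.of_forall_exists_nsmul_eq hdiv).extension_property_addMonoidHom B.subtype
        B.subtype_injective f
    exact ⟨g, DFunLike.congr_fun hg⟩
  · intro hext d n hn
    have hmul : Function.Injective (AddMonoidHom.mulLeft (n : ℤ)) :=
      mul_right_injective₀ (by exact_mod_cast hn.ne')
    obtain ⟨g, hg⟩ := AddMonoidHom.exists_comp_eq_of_forall_addSubgroup hext hmul
      (zmultiplesHom D d)
    refine ⟨g 1, ?_⟩
    calc n • g 1 = g (n * 1) := by rw [← map_nsmul, nsmul_eq_mul]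
      _ = d := by simpa using DFunLike.congr_fun hg 1
end

section
/- Let B be a complete Boolean algebra. For every Boolean algebra A₁, every Boolean subalgebra A of A₁, and every Boolean algebra homomorphism g : A → B, there exists a Boolean algebra homomorphism g₁ : A₁ → B extending g (i.e., complete Boolean algebras are injective in the category of Boolean algebras). -/
/-!
By Zorn's lemma the graph of `g` along `i` lies in a maximal Boolean subalgebra `M` of `A₁ × B`
that is still the graph of a partial homomorphism. For `x : A₁` let
`b = sSup {c | (y, c) ∈ M, y ≤ x}`, which exists by completeness of `B`. For `(y, c) ∈ M` we get
`c ≤ b` when `y ≤ x` and `b ≤ c` when `x ≤ y`, and this is exactly what keeps the subalgebra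
generated by `M` and `(x, b)` a graph. By maximality `(x, b) ∈ M`, so `M` is the graph of a
homomorphism defined on all of `A₁`.
-/

def BoundedLatticeHom.prod {γ α β : Type*} [Lattice γ] [BoundedOrder γ] [Lattice α]
    [BoundedOrder α] [Lattice β] [BoundedOrder β] (f : BoundedLatticeHom γ α)
    (g : BoundedLatticeHom γ β) : BoundedLatticeHom γ (α × β) where
  toFun a := (f a, g a)
  map_sup' a b := Prod.ext (map_sup f a b) (map_sup g a b)
  map_inf' a b := Prod.ext (map_inf f a b) (map_inf g a b)
  map_top' := Prod.ext (map_top f) (map_top g)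
  map_bot' := Prod.ext (map_bot f) (map_bot g)

namespace BooleanSubalgebra

section Generic

variable {α : Type*} [BooleanAlgebra α]

lemma mem_sSup_of_directedOn {S : Set (BooleanSubalgebra α)} (hne : S.Nonempty)
    (hS : DirectedOn (· ≤ ·) S) {a : α} : a ∈ sSup S ↔ ∃ L ∈ S, a ∈ L := by
  have mem_common {a b : α} : (∃ L ∈ S, a ∈ L) → (∃ M ∈ S, b ∈ M) → ∃ N ∈ S, a ∈ N ∧ b ∈ N := by
    rintro ⟨L, hL, ha⟩ ⟨M, hM, hb⟩
    obtain ⟨N, hN, hLN, hMN⟩ := hS L hL M hM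
    exact ⟨N, hN, hLN ha, hMN hb⟩
  let U : BooleanSubalgebra α :=
    { carrier := {a | ∃ L ∈ S, a ∈ L}
      supClosed' _ ha _ hb :=
        let ⟨N, hN, ha, hb⟩ := mem_common ha hb
        ⟨N, hN, sup_mem ha hb⟩
      infClosed' _ ha _ hb :=
        let ⟨N, hN, ha, hb⟩ := mem_common ha hb
        ⟨N, hN, inf_mem ha hb⟩
      compl_mem' := fun ⟨L, hL, ha⟩ => ⟨L, hL, compl_mem ha⟩
      bot_mem' := let ⟨L, hL⟩ := hne; ⟨L, hL, L.bot_mem⟩ }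
  have hle : sSup S ≤ U := sSup_le fun L hL _ ha => ⟨L, hL, ha⟩
  exact ⟨fun ha => hle ha, fun ⟨L, hL, ha⟩ => le_sSup hL ha⟩

def piecewise (z p q : α) : α := p ⊓ z ⊔ q ⊓ zᶜ

lemma piecewise_sup_piecewise (z p q p' q' : α) :
    piecewise z p q ⊔ piecewise z p' q' = piecewise z (p ⊔ p') (q ⊔ q') := by
  simp only [piecewise]
  rw [inf_sup_right, inf_sup_right, sup_sup_sup_comm]

lemma piecewise_inf_piecewise (z p q p' q' : α) :
    piecewise z p q ⊓ piecewise z p' q' = piecewise z (p ⊓ p') (q ⊓ q') := by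
  simp only [piecewise, inf_sup_left, inf_sup_right]
  rw [inf_inf_inf_comm p z p' z, inf_inf_inf_comm p z q' zᶜ, inf_inf_inf_comm q zᶜ p' z,
    inf_inf_inf_comm q zᶜ q' zᶜ]
  simp

lemma compl_piecewise (z p q : α) : (piecewise z p q)ᶜ = piecewise z pᶜ qᶜ := by
  refine compl_unique ?_ ?_
  · rw [piecewise_inf_piecewise, inf_compl_self, inf_compl_self, piecewise]
    simp
  · rw [piecewise_sup_piecewise, sup_compl_eq_top, sup_compl_eq_top, piecewise]
    simp

lemma piecewise_self (z p : α) : piecewise z p p = p := by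
  rw [piecewise, ← inf_sup_left, sup_compl_eq_top, inf_top_eq]

lemma piecewise_top_bot (z : α) : piecewise z ⊤ ⊥ = z := by
  simp [piecewise]

def adjoin (L : BooleanSubalgebra α) (z : α) : BooleanSubalgebra α where
  carrier := {w | ∃ p ∈ L, ∃ q ∈ L, piecewise z p q = w}
  supClosed' := by
    rintro _ ⟨p, hp, q, hq, rfl⟩ _ ⟨p', hp', q', hq', rfl⟩
    exact ⟨p ⊔ p', sup_mem hp hp', q ⊔ q', sup_mem hq hq', (piecewise_sup_piecewise ..).symm⟩
  infClosed' := by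
    rintro _ ⟨p, hp, q, hq, rfl⟩ _ ⟨p', hp', q', hq', rfl⟩
    exact ⟨p ⊓ p', inf_mem hp hp', q ⊓ q', inf_mem hq hq', (piecewise_inf_piecewise ..).symm⟩
  compl_mem' := by
    rintro _ ⟨p, hp, q, hq, rfl⟩
    exact ⟨pᶜ, compl_mem hp, qᶜ, compl_mem hq, (compl_piecewise ..).symm⟩
  bot_mem' := ⟨⊥, L.bot_mem, ⊥, L.bot_mem, piecewise_self ..⟩

lemma le_adjoin (L : BooleanSubalgebra α) (z : α) : L ≤ L.adjoin z :=
  fun w hw => ⟨w, hw, w, hw, piecewise_self ..⟩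

lemma mem_adjoin_self (L : BooleanSubalgebra α) (z : α) : z ∈ L.adjoin z :=
  ⟨⊤, L.top_mem, ⊥, L.bot_mem, piecewise_top_bot z⟩

end Generic

section Graph

variable {α β : Type*} [BooleanAlgebra α] [BooleanAlgebra β]

/-- A Boolean subalgebra of `α × β` whose fibre over `⊥` is `{⊥}` is the graph of a homomorphism
from a Boolean subalgebra of `α` to `β`. -/
def IsPartialHomGraph (R : BooleanSubalgebra (α × β)) : Prop :=
  ∀ b, ((⊥ : α), b) ∈ R → b = ⊥

namespace IsPartialHomGraph

variable {R : BooleanSubalgebra (α × β)}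

lemma le_of_mem (hR : R.IsPartialHomGraph) {x y : α} {b c : β} (hxb : (x, b) ∈ R)
    (hyc : (y, c) ∈ R) (hxy : x ≤ y) : b ≤ c := by
  have hsdiff : (x \ y, b \ c) ∈ R := sdiff_mem hxb hyc
  rw [sdiff_eq_bot_iff.2 hxy] at hsdiff
  exact sdiff_eq_bot_iff.1 (hR _ hsdiff)

lemma eq_of_mem (hR : R.IsPartialHomGraph) {x : α} {b c : β} (hb : (x, b) ∈ R)
    (hc : (x, c) ∈ R) : b = c :=
  le_antisymm (hR.le_of_mem hb hc le_rfl) (hR.le_of_mem hc hb le_rfl)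

lemma exists_boundedLatticeHom (hR : R.IsPartialHomGraph) (htot : ∀ x, ∃ b, (x, b) ∈ R) :
    ∃ f : BoundedLatticeHom α β, ∀ x, (x, f x) ∈ R := by
  choose f hf using htot
  refine ⟨{ toFun := f
            map_sup' := fun x y => hR.eq_of_mem (hf (x ⊔ y)) (sup_mem (hf x) (hf y))
            map_inf' := fun x y => hR.eq_of_mem (hf (x ⊓ y)) (inf_mem (hf x) (hf y))
            map_top' := hR.eq_of_mem (hf ⊤) R.top_mem
            map_bot' := hR.eq_of_mem (hf ⊥) R.bot_mem }, hf⟩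

end IsPartialHomGraph

lemma isPartialHomGraph_sSup {c : Set (BooleanSubalgebra (α × β))} (hc : ∀ R ∈ c, R.IsPartialHomGraph)
    (hchain : IsChain (· ≤ ·) c) (hne : c.Nonempty) : (sSup c).IsPartialHomGraph := by
  intro b hb
  obtain ⟨R, hRc, hbR⟩ := (mem_sSup_of_directedOn hne hchain.directedOn).1 hb
  exact hc R hRc b hbR

lemma isPartialHomGraph_map_prod {A : Type*} [BooleanAlgebra A] {i : BoundedLatticeHom A α}
    (hi : Function.Injective i) (g : BoundedLatticeHom A β) :
    ((⊤ : BooleanSubalgebra A).map (i.prod g)).IsPartialHomGraph := by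
  rintro b ⟨a, -, hab⟩
  have hia : i a = ⊥ := congrArg Prod.fst hab
  have hga : g a = b := congrArg Prod.snd hab
  have ha : a = ⊥ := hi (hia.trans (BotHomClass.map_bot i).symm)
  rw [← hga, ha, BotHomClass.map_bot]

end Graph

variable {α β : Type*} [BooleanAlgebra α] [CompleteBooleanAlgebra β]

lemma IsPartialHomGraph.adjoin {R : BooleanSubalgebra (α × β)}
    (hR : R.IsPartialHomGraph) (x : α) :
    (R.adjoin (x, sSup {c | ∃ y ≤ x, (y, c) ∈ R})).IsPartialHomGraph := by
  set b := sSup {c | ∃ y ≤ x, (y, c) ∈ R}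
  rintro d ⟨⟨u, c⟩, hp, ⟨v, e⟩, hq, h⟩
  obtain ⟨hx, rfl⟩ := Prod.ext_iff.1 h
  obtain ⟨hux, hvx⟩ : u ⊓ x = ⊥ ∧ v ⊓ xᶜ = ⊥ := sup_eq_bot_iff.1 hx
  have hxu : x ≤ uᶜ := le_compl_iff_disjoint_right.2 (disjoint_iff.2 (by rwa [inf_comm]))
  have hbc : b ≤ cᶜ := sSup_le fun c' ⟨y, hyx, hyc'⟩ =>
    hR.le_of_mem hyc' (compl_mem hp) (hyx.trans hxu)
  have heb : e ≤ b := le_sSup ⟨v, sdiff_eq_bot_iff.1 (by rwa [sdiff_eq]), hq⟩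
  change c ⊓ b ⊔ e ⊓ bᶜ = ⊥
  rw [inf_comm, (le_compl_iff_disjoint_right.1 hbc).eq_bot, ← sdiff_eq, sdiff_eq_bot_iff.2 heb,
    sup_bot_eq]

end BooleanSubalgebra

open BooleanSubalgebra in
/-- Complete Boolean algebras are injective in the category of Boolean algebras:
for a subalgebra `A` of `A₁` (presented via an injective Boolean hom `i`), every
Boolean hom `g : A → B` extends to `A₁`. -/
theorem complete_boolean_algebra_injective
    {B : Type*} [CompleteBooleanAlgebra B]
    {A A₁ : Type*} [BooleanAlgebra A] [BooleanAlgebra A₁]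
    (i : BoundedLatticeHom A A₁) (hi : Function.Injective i)
    (g : BoundedLatticeHom A B) :
    ∃ g₁ : BoundedLatticeHom A₁ B, ∀ a : A, g₁ (i a) = g a := by
  obtain ⟨M, hgM, hM⟩ := zorn_le_nonempty₀ {R : BooleanSubalgebra (A₁ × B) | R.IsPartialHomGraph}
    (fun c hc hchain R hR => ⟨sSup c, isPartialHomGraph_sSup hc hchain ⟨R, hR⟩,
      fun _ => le_sSup⟩) _ (isPartialHomGraph_map_prod hi g)
  have htot (x : A₁) : ∃ b, (x, b) ∈ M := by
    have hext := hM.eq_of_ge (hM.prop.adjoin x) (M.le_adjoin _)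
    exact ⟨_, hext ▸ M.mem_adjoin_self _⟩
  obtain ⟨f, hf⟩ := hM.prop.exists_boundedLatticeHom htot
  exact ⟨f, fun a => hM.prop.eq_of_mem (hf (i a)) (hgM ⟨a, trivial, rfl⟩)⟩
end
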